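/- Let A ∈ ℝ^{m×n} have full row rank and x ∈ ℝⁿ with x > 0. For any ζ_x ∈ ℝ^m, define λ_x = −Aᵀ(AAᵀ)⁻¹ζ_x and ψ_x = XAᵀ(AX²Aᵀ)⁻¹ζ_x + X⁻¹λ_x. Then ‖ψ_x‖ ≤ ( 1/( (min_j x_j)·σ_min(A) ) + 1/√(λ_min(AX²Aᵀ)) )·‖ζ_x‖; in particular, each term is bounded as ‖X⁻¹λ_x‖ ≤ ‖ζ_x‖/((min_j x_j)·σ_min(A)) and ‖XAᵀ(AX²Aᵀ)⁻¹ζ_x‖ ≤ ‖ζ_x‖/√(λ_min(AX²Aᵀ)). -/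

import Mathlib

open Matrix

noncomputable def eucNorm {ι : Type*} [Fintype ι] (v : ι → ℝ) : ℝ :=
  Real.sqrt (∑ i, (v i) ^ 2)

noncomputable def opNorm {ι κ : Type*} [Fintype ι] [Fintype κ]
    (M : Matrix ι κ ℝ) : ℝ :=
  sSup {r : ℝ | ∃ v : κ → ℝ, eucNorm v ≤ 1 ∧ r = eucNorm (M *ᵥ v)}

noncomputable def lambdaMin {ι : Type*} [Fintype ι] (M : Matrix ι ι ℝ) : ℝ :=
  sInf {r : ℝ | ∃ v : ι → ℝ, eucNorm v = 1 ∧ r = v ⬝ᵥ (M *ᵥ v)}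

noncomputable def lambdaMax {ι : Type*} [Fintype ι] (M : Matrix ι ι ℝ) : ℝ :=
  sSup {r : ℝ | ∃ v : ι → ℝ, eucNorm v = 1 ∧ r = v ⬝ᵥ (M *ᵥ v)}

noncomputable def condNum {ι : Type*} [Fintype ι] (M : Matrix ι ι ℝ) : ℝ :=
  lambdaMax M / lambdaMin M

noncomputable def gradProj {m n : ℕ} (B : Matrix (Fin m) (Fin n) ℝ) :
    Matrix (Fin n) (Fin n) ℝ :=
  1 - Bᵀ * (B * Bᵀ)⁻¹ * B

/-- The proximity measure `δ(x, μ) = ‖P_{AX}((1/μ) X c - e)‖`. -/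
noncomputable def prox {m n : ℕ} (A : Matrix (Fin m) (Fin n) ℝ)
    (c x : Fin n → ℝ) (μ : ℝ) : ℝ :=
  eucNorm (gradProj (A * Matrix.diagonal x) *ᵥ (μ⁻¹ • (Matrix.diagonal x *ᵥ c) - 1))

/-- The proximity measure as `min_{(y,s) ∈ F_d} ‖(1/μ) X s - e‖`. -/
noncomputable def proxMin {m n : ℕ} (A : Matrix (Fin m) (Fin n) ℝ)
    (c x : Fin n → ℝ) (μ : ℝ) : ℝ :=
  sInf {r : ℝ | ∃ (y : Fin m → ℝ) (s : Fin n → ℝ),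
    Aᵀ *ᵥ y + s = c ∧ (∀ i, 0 ≤ s i) ∧
    r = eucNorm (μ⁻¹ • (Matrix.diagonal x *ᵥ s) - 1)}

/-- The primal normal matrix `A X² Aᵀ` is positive semidefinite. -/
theorem normalPSD {m n : ℕ} (A : Matrix (Fin m) (Fin n) ℝ) (x : Fin n → ℝ) :
    (A * Matrix.diagonal x ^ 2 * Aᵀ).PosSemidef := by
  have h : A * Matrix.diagonal x ^ 2 * Aᵀ
      = (A * Matrix.diagonal x) * (A * Matrix.diagonal x)ᴴ := by
    rw [Matrix.conjTranspose_mul, Matrix.conjTranspose_eq_transpose_of_trivial,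
      Matrix.conjTranspose_eq_transpose_of_trivial, Matrix.diagonal_transpose, pow_two,
      Matrix.mul_assoc, Matrix.mul_assoc, Matrix.mul_assoc]
  rw [h]
  exact Matrix.posSemidef_self_mul_conjTranspose _

/-!
Write `B = A X`, so that `X Aᵀ (A X² Aᵀ)⁻¹ ζ = Bᵀ (B Bᵀ)⁻¹ ζ`. For any `B` of full row rank,
`‖Bᵀ (B Bᵀ)⁻¹ ζ‖² = ζᵀ (B Bᵀ)⁻¹ ζ ≤ ‖ζ‖² / λ_min(B Bᵀ)`, by the Rayleigh-quotient bound
`λ_min ‖u‖² ≤ uᵀ (B Bᵀ) u` at `u = (B Bᵀ)⁻¹ ζ` and Cauchy–Schwarz. Taking `B = A` and then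
applying `X⁻¹`, whose entries are at most `1 / min_j x_j`, bounds `X⁻¹ λ_x`; the triangle
inequality combines the two. The Rayleigh quotient attains its infimum on the compact unit
sphere, so `λ_min` of a positive definite matrix is positive.
-/

section eucNorm

variable {ι : Type*} [Fintype ι]

lemma eucNorm_eq_norm_toLp (v : ι → ℝ) : eucNorm v = ‖WithLp.toLp 2 v‖ := by
  simp [eucNorm, EuclideanSpace.norm_eq]

lemma eucNorm_nonneg (v : ι → ℝ) : 0 ≤ eucNorm v := Real.sqrt_nonneg _

lemma eucNorm_neg (v : ι → ℝ) : eucNorm (-v) = eucNorm v := by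
  simp [eucNorm_eq_norm_toLp]

lemma eucNorm_add_le (v w : ι → ℝ) : eucNorm (v + w) ≤ eucNorm v + eucNorm w := by
  simpa [eucNorm_eq_norm_toLp] using norm_add_le (WithLp.toLp 2 v) (WithLp.toLp 2 w)

lemma eucNorm_smul (c : ℝ) (v : ι → ℝ) : eucNorm (c • v) = |c| * eucNorm v := by
  simp [eucNorm_eq_norm_toLp, norm_smul]

lemma eucNorm_sq (v : ι → ℝ) : eucNorm v ^ 2 = v ⬝ᵥ v := by
  rw [eucNorm, Real.sq_sqrt (Finset.sum_nonneg fun i _ => sq_nonneg _)]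
  simp [dotProduct, sq]

lemma dotProduct_le_eucNorm_mul (v w : ι → ℝ) : v ⬝ᵥ w ≤ eucNorm v * eucNorm w :=
  Real.sum_mul_le_sqrt_mul_sqrt _ _ _

lemma eucNorm_le_of_abs_le {v w : ι → ℝ} (h : ∀ i, |v i| ≤ |w i|) : eucNorm v ≤ eucNorm w :=
  Real.sqrt_le_sqrt <| Finset.sum_le_sum fun i _ => sq_le_sq.mpr (h i)

end eucNorm

section lambdaMin

variable {ι : Type*} [Fintype ι] (M : Matrix ι ι ℝ)

lemma isCompact_rayleigh_quotients :
    IsCompact {r : ℝ | ∃ v : ι → ℝ, eucNorm v = 1 ∧ r = v ⬝ᵥ (M *ᵥ v)} := by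
  have hset : {r : ℝ | ∃ v : ι → ℝ, eucNorm v = 1 ∧ r = v ⬝ᵥ (M *ᵥ v)} =
      (fun w : EuclideanSpace ℝ ι => w.ofLp ⬝ᵥ (M *ᵥ w.ofLp)) '' Metric.sphere 0 1 := by
    ext r
    constructor
    · rintro ⟨v, hv, rfl⟩
      exact ⟨WithLp.toLp 2 v, by simpa [eucNorm_eq_norm_toLp] using hv, rfl⟩
    · rintro ⟨w, hw, rfl⟩
      exact ⟨w.ofLp, by simpa [eucNorm_eq_norm_toLp] using hw, rfl⟩
  rw [hset]
  exact (isCompact_sphere 0 1).image (by fun_prop)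

lemma lambdaMin_le {v : ι → ℝ} (hv : eucNorm v = 1) : lambdaMin M ≤ v ⬝ᵥ (M *ᵥ v) :=
  csInf_le (isCompact_rayleigh_quotients M).bddBelow ⟨v, hv, rfl⟩

lemma exists_eucNorm_eq_one_lambdaMin_eq [Nonempty ι] :
    ∃ v : ι → ℝ, eucNorm v = 1 ∧ lambdaMin M = v ⬝ᵥ (M *ᵥ v) := by
  classical
  refine (isCompact_rayleigh_quotients M).sInf_mem ?_
  obtain ⟨i⟩ := ‹Nonempty ι›
  exact ⟨_, Pi.single i 1, by simp [eucNorm, Pi.single_apply], rfl⟩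

lemma lambdaMin_pos [Nonempty ι] {M : Matrix ι ι ℝ} (hM : M.PosDef) : 0 < lambdaMin M := by
  obtain ⟨v, hv, hvM⟩ := exists_eucNorm_eq_one_lambdaMin_eq M
  have hv0 : v ≠ 0 := by rintro rfl; simp [eucNorm] at hv
  simpa [hvM] using hM.dotProduct_mulVec_pos hv0

lemma lambdaMin_nonneg {M : Matrix ι ι ℝ} (hM : M.PosSemidef) : 0 ≤ lambdaMin M :=
  Real.sInf_nonneg fun _ ⟨v, _, hr⟩ => hr ▸ by simpa using hM.dotProduct_mulVec_nonneg v

lemma lambdaMin_mul_dotProduct_self_le (v : ι → ℝ) :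
    lambdaMin M * (v ⬝ᵥ v) ≤ v ⬝ᵥ (M *ᵥ v) := by
  rcases eq_or_ne v 0 with rfl | hv
  · simp
  have hpos : 0 < eucNorm v := by
    rw [eucNorm_eq_norm_toLp, norm_pos_iff]
    simpa using hv
  have hunit : eucNorm ((eucNorm v)⁻¹ • v) = 1 := by
    rw [eucNorm_smul, abs_inv, abs_of_pos hpos, inv_mul_cancel₀ hpos.ne']
  have h := lambdaMin_le M hunit
  rw [smul_dotProduct, mulVec_smul, dotProduct_smul, smul_eq_mul, smul_eq_mul, ← mul_assoc,
    ← sq, inv_pow, ← div_eq_inv_mul, le_div_iff₀ (by positivity)] at h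
  rwa [← eucNorm_sq]

end lambdaMin

section normalEquations

variable {ι κ : Type*} [Fintype ι] [Fintype κ]

lemma posDef_mul_transpose_of_rank_eq_card (B : Matrix ι κ ℝ) (h : B.rank = Fintype.card ι) :
    (B * Bᵀ).PosDef := by
  have hrows : LinearIndependent ℝ B.row := by
    rw [linearIndependent_iff_card_eq_finrank_span, Set.finrank, ← rank_eq_finrank_span_row, h]
  simpa using PosDef.mul_conjTranspose_self B (vecMul_injective_iff.mpr hrows)

variable [DecidableEq ι]

lemma lambdaMin_mul_dotProduct_inv_mulVec_le {M : Matrix ι ι ℝ} (hM : M.PosDef) (ζ : ι → ℝ) :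
    lambdaMin M * (ζ ⬝ᵥ (M⁻¹ *ᵥ ζ)) ≤ eucNorm ζ ^ 2 := by
  set u := M⁻¹ *ᵥ ζ
  have hMu : M *ᵥ u = ζ := by
    rw [mulVec_mulVec, mul_nonsing_inv _ (isUnit_iff_ne_zero.mpr hM.det_pos.ne'), one_mulVec]
  have hlam := lambdaMin_nonneg hM.posSemidef
  have hrayleigh := lambdaMin_mul_dotProduct_self_le M u
  rw [hMu, ← eucNorm_sq, dotProduct_comm] at hrayleigh
  have hcs := dotProduct_le_eucNorm_mul ζ u
  -- `λ‖u‖² ≤ ζ ⬝ u ≤ ‖ζ‖‖u‖` forces `λ‖u‖ ≤ ‖ζ‖`, hence `λ (ζ ⬝ u) ≤ ‖ζ‖²`.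
  nlinarith [sq_nonneg (lambdaMin M * eucNorm u - eucNorm ζ),
    mul_le_mul_of_nonneg_left hrayleigh hlam, mul_le_mul_of_nonneg_left hcs hlam]

lemma eucNorm_transpose_mul_inv_mulVec_le (B : Matrix ι κ ℝ) (hB : (B * Bᵀ).PosDef)
    (ζ : ι → ℝ) :
    eucNorm ((Bᵀ * (B * Bᵀ)⁻¹) *ᵥ ζ) ≤ eucNorm ζ / √(lambdaMin (B * Bᵀ)) := by
  have hsq : eucNorm ((Bᵀ * (B * Bᵀ)⁻¹) *ᵥ ζ) ^ 2 = ζ ⬝ᵥ ((B * Bᵀ)⁻¹ *ᵥ ζ) := by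
    rw [eucNorm_sq, ← mulVec_mulVec, mulVec_transpose, ← dotProduct_mulVec, ← mulVec_transpose,
      mulVec_mulVec, mulVec_mulVec, mul_nonsing_inv _ (isUnit_iff_ne_zero.mpr hB.det_pos.ne'),
      one_mulVec, dotProduct_comm]
  cases isEmpty_or_nonempty ι
  · simp [Subsingleton.elim ζ 0, eucNorm]
  have hlam := lambdaMin_pos hB
  rw [le_div_iff₀ (Real.sqrt_pos.mpr hlam),
    ← pow_le_pow_iff_left₀ (mul_nonneg (eucNorm_nonneg _) (Real.sqrt_nonneg _))
    (eucNorm_nonneg ζ) two_ne_zero, mul_pow, Real.sq_sqrt hlam.le, hsq, mul_comm]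
  exact lambdaMin_mul_dotProduct_inv_mulVec_le hB ζ

end normalEquations

lemma eucNorm_diagonal_inv_mulVec_le {ι : Type*} [Fintype ι] [DecidableEq ι] {x : ι → ℝ}
    (hx : ∀ i, 0 < x i) (v : ι → ℝ) :
    eucNorm ((diagonal x)⁻¹ *ᵥ v) ≤ eucNorm v / sInf (Set.range x) := by
  cases isEmpty_or_nonempty ι
  · simp [Subsingleton.elim v 0, eucNorm]
  set s := sInf (Set.range x)
  have hs : 0 < s := by
    obtain ⟨i, hi⟩ := (Set.range_nonempty x).csInf_mem (Set.finite_range x)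
    exact (hx i).trans_eq hi
  have hsle (i : ι) : s ≤ x i := csInf_le (Set.finite_range x).bddBelow ⟨i, rfl⟩
  rw [div_eq_inv_mul, ← abs_of_pos (inv_pos.mpr hs), ← eucNorm_smul]
  have hinv : (diagonal x)⁻¹ = diagonal x⁻¹ :=
    inv_eq_left_inv <| by simp [diagonal_mul_diagonal, fun i => (hx i).ne']
  refine eucNorm_le_of_abs_le fun i => ?_
  rw [hinv, mulVec_diagonal, Pi.smul_apply, smul_eq_mul, abs_mul, abs_mul]
  refine mul_le_mul_of_nonneg_right ?_ (abs_nonneg _)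
  rw [Pi.inv_apply, abs_inv, abs_inv, abs_of_pos (hx i), abs_of_pos hs]
  exact inv_anti₀ hs (hsle i)

/-- bound on the error vector `ψ_x` induced by an inexact
normal-equation solve. -/
theorem stmt_13 {m n : ℕ} (A : Matrix (Fin m) (Fin n) ℝ)
    (hrank : A.rank = m)
    (x : Fin n → ℝ) (hx : ∀ i, 0 < x i)
    (ζx : Fin m → ℝ)
    (lamx : Fin n → ℝ) (hlamx : lamx = -((Aᵀ * (A * Aᵀ)⁻¹) *ᵥ ζx))
    (ψx : Fin n → ℝ)
    (hψx : ψx = (Matrix.diagonal x * Aᵀ * (A * Matrix.diagonal x ^ 2 * Aᵀ)⁻¹) *ᵥ ζx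
      + (Matrix.diagonal x)⁻¹ *ᵥ lamx) :
    eucNorm ψx ≤ (1 / (sInf (Set.range x) * Real.sqrt (lambdaMin (A * Aᵀ)))
        + 1 / Real.sqrt (lambdaMin (A * Matrix.diagonal x ^ 2 * Aᵀ))) * eucNorm ζx ∧
    eucNorm ((Matrix.diagonal x)⁻¹ *ᵥ lamx)
      ≤ eucNorm ζx / (sInf (Set.range x) * Real.sqrt (lambdaMin (A * Aᵀ))) ∧
    eucNorm ((Matrix.diagonal x * Aᵀ * (A * Matrix.diagonal x ^ 2 * Aᵀ)⁻¹) *ᵥ ζx)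
      ≤ eucNorm ζx / Real.sqrt (lambdaMin (A * Matrix.diagonal x ^ 2 * Aᵀ)) := by
  set X := diagonal x
  have hXT : Xᵀ = X := diagonal_transpose x
  have hXAT : X * Aᵀ = (A * X)ᵀ := by rw [transpose_mul, hXT]
  have hAX : (A * X).rank = m := by
    rw [rank_mul_eq_left_of_isUnit_det X A, hrank]
    simpa [X, det_diagonal, isUnit_iff_ne_zero, Finset.prod_ne_zero_iff] using fun i => (hx i).ne'
  have hnormal : A * X ^ 2 * Aᵀ = (A * X) * (A * X)ᵀ := by
    rw [transpose_mul, hXT, sq, Matrix.mul_assoc, Matrix.mul_assoc, Matrix.mul_assoc]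
  have hdual : eucNorm (X⁻¹ *ᵥ lamx)
      ≤ eucNorm ζx / (sInf (Set.range x) * √(lambdaMin (A * Aᵀ))) := by
    rw [hlamx, mulVec_neg, eucNorm_neg, mul_comm, ← div_div]
    refine (eucNorm_diagonal_inv_mulVec_le hx _).trans (div_le_div_of_nonneg_right ?_ ?_)
    · exact eucNorm_transpose_mul_inv_mulVec_le A
        (posDef_mul_transpose_of_rank_eq_card A (by simpa using hrank)) ζx
    · exact Real.sInf_nonneg fun _ ⟨i, hi⟩ => hi ▸ (hx i).le
  have hprimal : eucNorm ((X * Aᵀ * (A * X ^ 2 * Aᵀ)⁻¹) *ᵥ ζx)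
      ≤ eucNorm ζx / √(lambdaMin (A * X ^ 2 * Aᵀ)) := by
    rw [hnormal, hXAT]
    exact eucNorm_transpose_mul_inv_mulVec_le (A * X)
      (posDef_mul_transpose_of_rank_eq_card (A * X) (by simpa using hAX)) ζx
  refine ⟨?_, hdual, hprimal⟩
  calc eucNorm ψx ≤ eucNorm ((X * Aᵀ * (A * X ^ 2 * Aᵀ)⁻¹) *ᵥ ζx) + eucNorm (X⁻¹ *ᵥ lamx) :=
        hψx ▸ eucNorm_add_le _ _
    _ ≤ eucNorm ζx / √(lambdaMin (A * X ^ 2 * Aᵀ))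
        + eucNorm ζx / (sInf (Set.range x) * √(lambdaMin (A * Aᵀ))) := add_le_add hprimal hdual
    _ = _ := by ring
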